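/- arXiv:2107.12028 — 4 statements merged into one kernel-verified Lean document; each statement's English description precedes it below -/
import Mathlib

section
/- Let K be a positive natural number, α > 0, s > 0, and let p_c > 0 and p : Fin K → ℝ satisfy p i > 0 for all i and p_c + ∑_i p i = s. Then -log p_c - α * ∑_i log (p i) ≥ -log (s / (1 + α * K)) - α * (K : ℝ) * log (α * s / (1 + α * K)), with equality if and only if p_c = s / (1 + α * K) and p i = α * s / (1 + α * K) for every i. -/
lemma log_aux {x c : ℝ} (hx : 0 < x) (hc : 0 < c) :
    Real.log x - Real.log c ≤ x / c - 1 ∧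
      (Real.log x - Real.log c = x / c - 1 ↔ x = c) := by
  rw [← Real.log_div hx.ne' hc.ne']
  refine ⟨Real.log_le_sub_one_of_pos (div_pos hx hc), ?_, ?_⟩
  · intro h
    by_contra hne
    have h1 : x / c ≠ 1 := by
      intro h1
      exact hne (by field_simp at h1; linarith)
    have := Real.log_lt_sub_one_of_pos (div_pos hx hc) h1
    linarith
  · intro h
    subst h
    rw [div_self hc.ne', Real.log_one]
    norm_num

theorem stmt_4 (K : ℕ) (hK : 0 < K) (α : ℝ) (hα : 0 < α) (s : ℝ) (hs : 0 < s)
    (pc : ℝ) (hpc : 0 < pc)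
    (p : Fin K → ℝ) (hp : ∀ i, 0 < p i) (hsum : pc + ∑ i, p i = s) :
    (-Real.log pc - α * ∑ i, Real.log (p i) ≥
      -Real.log (s / (1 + α * K)) - α * (K : ℝ) * Real.log (α * s / (1 + α * K))) ∧
    ((-Real.log pc - α * ∑ i, Real.log (p i) =
      -Real.log (s / (1 + α * K)) - α * (K : ℝ) * Real.log (α * s / (1 + α * K))) ↔
      (pc = s / (1 + α * K) ∧ ∀ i, p i = α * s / (1 + α * K))) := by
  have hD : (0:ℝ) < 1 + α * K := by positivity
  set a : ℝ := s / (1 + α * K) with ha_def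
  set b : ℝ := α * s / (1 + α * K) with hb_def
  have ha : 0 < a := by positivity
  have hb : 0 < b := by positivity
  -- pointwise bounds
  have h1 := (log_aux hpc ha).1
  have h1iff := (log_aux hpc ha).2
  have h2 : ∀ i : Fin K, Real.log (p i) - Real.log b ≤ p i / b - 1 :=
    fun i => (log_aux (hp i) hb).1
  have hsumle : ∑ i, (Real.log (p i) - Real.log b) ≤ ∑ i, (p i / b - 1) :=
    Finset.sum_le_sum fun i _ => h2 i
  -- sums expand
  have hS : ∑ i, (Real.log (p i) - Real.log b)
      = (∑ i, Real.log (p i)) - (K : ℝ) * Real.log b := by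
    rw [Finset.sum_sub_distrib]
    simp [mul_comm]
  have hSu : ∑ i, (p i / b - 1) = (∑ i, p i) / b - (K : ℝ) := by
    rw [Finset.sum_sub_distrib, Finset.sum_div]
    simp
  -- the linear terms sum to zero
  have hzero : (pc / a - 1) + α * ((∑ i, p i) / b - (K : ℝ)) = 0 := by
    have hps : ∑ i, p i = s - pc := by linarith
    rw [hps, ha_def, hb_def]
    field_simp
    ring
  constructor
  · have hmul := mul_le_mul_of_nonneg_left hsumle hα.le
    rw [hS, hSu] at hmul
    have e1 : α * ((∑ i, Real.log (p i)) - (K : ℝ) * Real.log b)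
        = α * ∑ i, Real.log (p i) - α * (K : ℝ) * Real.log b := by ring
    rw [e1] at hmul
    linarith
  constructor
  · intro heq
    -- equality forces each bound tight
    have hmul := mul_le_mul_of_nonneg_left hsumle hα.le
    rw [hS, hSu] at hmul
    have e1 : α * ((∑ i, Real.log (p i)) - (K : ℝ) * Real.log b)
        = α * ∑ i, Real.log (p i) - α * (K : ℝ) * Real.log b := by ring
    rw [e1] at hmul
    -- from heq: (log pc - log a) + α*(∑ log p i - K log b) = 0
    have hEeq : (Real.log pc - Real.log a)
        + (α * ∑ i, Real.log (p i) - α * (K : ℝ) * Real.log b) = 0 := by linarith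
    -- so log pc - log a = pc/a - 1 and the p-sum is tight
    have h1eq : Real.log pc - Real.log a = pc / a - 1 := by linarith
    have hsumeq : α * ((∑ i, Real.log (p i)) - (K : ℝ) * Real.log b)
        = α * ((∑ i, p i) / b - (K : ℝ)) := by
      have := h1iff.1 h1eq  -- not needed here but fine
      nlinarith [hEeq, hzero, h1eq]
    have hsum2 : ∑ i, (Real.log (p i) - Real.log b) = ∑ i, (p i / b - 1) := by
      rw [hS, hSu]
      exact mul_left_cancel₀ hα.ne' hsumeq
    refine ⟨h1iff.1 h1eq, fun i => ?_⟩
    have hterm : ∀ j ∈ (Finset.univ : Finset (Fin K)),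
        0 ≤ (p j / b - 1) - (Real.log (p j) - Real.log b) :=
      fun j _ => by linarith [h2 j]
    have htot : ∑ j, ((p j / b - 1) - (Real.log (p j) - Real.log b)) = 0 := by
      rw [Finset.sum_sub_distrib]; linarith [hsum2]
    have hall := (Finset.sum_eq_zero_iff_of_nonneg hterm).1 htot i (Finset.mem_univ i)
    have : Real.log (p i) - Real.log b = p i / b - 1 := by linarith
    exact (log_aux (hp i) hb).2.1 this
  · rintro ⟨hpc_eq, hp_eq⟩
    have : ∑ i, Real.log (p i) = (K : ℝ) * Real.log b := by
      rw [Finset.sum_congr rfl fun i _ => by rw [hp_eq i]]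
      simp [mul_comm]
    rw [hpc_eq, this]
    ring
end

section
/- Let K be a positive natural number, α > 0, and let p_c > 0 and p : Fin K → ℝ satisfy p i > 0 for all i and p_c + ∑_i p i ≤ 1. Then -log p_c - α * ∑_i log (p i) ≥ log (1 + α * K) + α * (K : ℝ) * log ((1 + α * K) / α), with equality if and only if p_c = 1 / (1 + α * K) and p i = α / (1 + α * K) for every i. -/
lemma glem (x c : ℝ) (hx : 0 < x) (hc : 0 < c) :
    0 ≤ Real.log c + x / c - 1 - Real.log x ∧
    (Real.log c + x / c - 1 - Real.log x = 0 ↔ x = c) := by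
  have hxc : 0 < x / c := div_pos hx hc
  have h1 : Real.log (x / c) = Real.log x - Real.log c := Real.log_div hx.ne' hc.ne'
  have h2 : Real.log (x / c) ≤ x / c - 1 := Real.log_le_sub_one_of_pos hxc
  refine ⟨by linarith, ?_, ?_⟩
  · intro h
    by_contra hne
    have hne1 : x / c ≠ 1 := by
      intro h1'
      exact hne (by rwa [div_eq_one_iff_eq hc.ne'] at h1')
    have := Real.log_lt_sub_one_of_pos hxc hne1
    linarith
  · intro h
    subst h
    rw [div_self hc.ne']
    ring

theorem stmt_5 (K : ℕ) (hK : 0 < K) (α : ℝ) (hα : 0 < α)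
    (pc : ℝ) (hpc : 0 < pc)
    (p : Fin K → ℝ) (hp : ∀ i, 0 < p i) (hsum : pc + ∑ i, p i ≤ 1) :
    (-Real.log pc - α * ∑ i, Real.log (p i) ≥
      Real.log (1 + α * K) + α * (K : ℝ) * Real.log ((1 + α * K) / α)) ∧
    ((-Real.log pc - α * ∑ i, Real.log (p i) =
      Real.log (1 + α * K) + α * (K : ℝ) * Real.log ((1 + α * K) / α)) ↔
      (pc = 1 / (1 + α * K) ∧ ∀ i, p i = α / (1 + α * K))) := by
  have hKpos : (0:ℝ) < K := by exact_mod_cast hK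
  set S : ℝ := 1 + α * K with hSdef
  have hS : 0 < S := by positivity
  have hinvS : 0 < 1 / S := by positivity
  have hαS : 0 < α / S := div_pos hα hS
  set A : ℝ := Real.log (1 / S) + pc / (1 / S) - 1 - Real.log pc with hAdef
  set B : Fin K → ℝ := fun i => Real.log (α / S) + p i / (α / S) - 1 - Real.log (p i) with hBdef
  have hA : 0 ≤ A ∧ (A = 0 ↔ pc = 1 / S) := glem pc (1 / S) hpc hinvS
  have hB : ∀ i, 0 ≤ B i ∧ (B i = 0 ↔ p i = α / S) := fun i => glem (p i) (α / S) (hp i) hαS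
  have hlog1 : Real.log (1 / S) = -Real.log S := by rw [one_div, Real.log_inv]
  have hlog2 : Real.log (α / S) = Real.log α - Real.log S := Real.log_div hα.ne' hS.ne'
  have hlog3 : Real.log (S / α) = Real.log S - Real.log α := Real.log_div hS.ne' hα.ne'
  clear_value S A B
  have hsumB : ∑ i, B i = (K : ℝ) * (Real.log α - Real.log S) + (S / α) * ∑ i, p i
      - (K : ℝ) - ∑ i, Real.log (p i) := by
    rw [hBdef]
    rw [Finset.sum_sub_distrib, Finset.sum_sub_distrib, Finset.sum_add_distrib]
    simp only [Finset.sum_const, Finset.card_univ, Fintype.card_fin, nsmul_eq_mul,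
      div_div_eq_mul_div, hlog2]
    rw [← Finset.sum_div, ← Finset.sum_mul]
    field_simp
  have key : (-Real.log pc - α * ∑ i, Real.log (p i))
      - (Real.log S + α * (K : ℝ) * Real.log (S / α))
      = A + α * ∑ i, B i + S * (1 - pc - ∑ i, p i) := by
    rw [hAdef, hsumB, hlog1, hlog3]
    have hdiv : pc / (1 / S) = pc * S := by field_simp
    rw [hdiv, hSdef]
    field_simp
    ring
  have hslack : 0 ≤ S * (1 - pc - ∑ i, p i) := by
    have : 0 ≤ 1 - pc - ∑ i, p i := by linarith
    exact mul_nonneg hS.le this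
  have hsumB0 : 0 ≤ ∑ i, B i := Finset.sum_nonneg fun i _ => (hB i).1
  have hαB : 0 ≤ α * ∑ i, B i := mul_nonneg hα.le hsumB0
  constructor
  · have h0 : 0 ≤ A + α * ∑ i, B i + S * (1 - pc - ∑ i, p i) := by
      linarith [hA.1]
    linarith [key, h0]
  · constructor
    · intro heq
      have hz : A + α * ∑ i, B i + S * (1 - pc - ∑ i, p i) = 0 := by
        rw [← key]; linarith
      have hA0 : A = 0 := by linarith [hA.1]
      have hαB0 : α * ∑ i, B i = 0 := by linarith [hA.1]
      have hB0 : ∑ i, B i = 0 := (mul_eq_zero.mp hαB0).resolve_left hα.ne'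
      refine ⟨(hA.2).mp hA0, fun i => ?_⟩
      have hBi : B i = 0 :=
        (Finset.sum_eq_zero_iff_of_nonneg (fun j _ => (hB j).1)).mp hB0 i (Finset.mem_univ i)
      exact ((hB i).2).mp hBi
    · rintro ⟨hpc', hpi⟩
      have hA0 : A = 0 := (hA.2).mpr hpc'
      have hsum0 : ∑ i, B i = 0 := Finset.sum_eq_zero fun i _ => ((hB i).2).mpr (hpi i)
      have hps : ∑ i, p i = (K : ℝ) * (α / S) := by
        rw [Finset.sum_congr rfl fun i _ => hpi i]
        simp [Finset.sum_const, Finset.card_univ]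
      have hslack0 : 1 - pc - ∑ i, p i = 0 := by
        rw [hpc', hps, hSdef]
        field_simp
        ring
      have hk := key
      rw [hA0, hsum0, hslack0] at hk
      simp only [mul_zero, add_zero, zero_add] at hk
      linarith [hk]
end

section
/- Let d, n be positive natural numbers, x ∈ EuclideanSpace ℝ (Fin d) with x ≠ 0, y : Fin n, β > 0 and S > 0 real constants, and c : Fin n → EuclideanSpace ℝ (Fin d). Define D(c) = ∑_{j} exp ⟪c j, x⟫ + S, p_k = exp ⟪c k, x⟫ / D(c), and L(c) = -⟪c y, x⟫ + β * log (D(c)). Then for k ≠ y, the directional derivative of c_k ↦ L (Function.update c k c_k) at c k in the direction x is strictly positive; and for k = y, if p_y < 1/β then this directional derivative in the direction x is strictly negative. -/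
theorem stmt_15 (d n : ℕ) (hd : 0 < d) (hn : 0 < n)
    (x : EuclideanSpace ℝ (Fin d)) (hx : x ≠ 0) (y : Fin n)
    (β S : ℝ) (hβ : 0 < β) (hS : 0 < S)
    (c : Fin n → EuclideanSpace ℝ (Fin d))
    (D : (Fin n → EuclideanSpace ℝ (Fin d)) → ℝ)
    (hD : ∀ c', D c' = (∑ j, Real.exp (inner ℝ (c' j) x : ℝ)) + S)
    (p : Fin n → ℝ) (hp : ∀ k, p k = Real.exp (inner ℝ (c k) x : ℝ) / D c)
    (L : (Fin n → EuclideanSpace ℝ (Fin d)) → ℝ)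
    (hL : ∀ c', L c' = -(inner ℝ (c' y) x : ℝ) + β * Real.log (D c')) :
    (∀ k : Fin n, k ≠ y →
      0 < fderiv ℝ (fun ck => L (Function.update c k ck)) (c k) x) ∧
    (p y < 1 / β →
      fderiv ℝ (fun ck => L (Function.update c y ck)) (c y) x < 0) := by
  have hxx : (0:ℝ) < inner ℝ x x := by
    rw [real_inner_self_eq_norm_sq]
    exact pow_pos (norm_pos_iff.mpr hx) 2
  have hDpos : 0 < D c := by
    rw [hD]
    exact add_pos_of_nonneg_of_pos
      (Finset.sum_nonneg fun j _ => (Real.exp_pos _).le) hS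
  -- common setup for each k
  have main : ∀ k : Fin n,
      fderiv ℝ (fun ck => L (Function.update c k ck)) (c k) x
        = β * ((Real.exp (inner ℝ (c k) x : ℝ)) / D c) * (inner ℝ x x : ℝ)
          - (if k = y then (inner ℝ x x : ℝ) else 0) := by
    intro k
    set A : ℝ := (∑ j ∈ Finset.univ.erase k, Real.exp (inner ℝ (c j) x : ℝ)) + S with hAdef
    have hA : 0 < A :=
      add_pos_of_nonneg_of_pos
        (Finset.sum_nonneg fun j _ => (Real.exp_pos _).le) hS
    have hDc : D c = Real.exp (inner ℝ (c k) x : ℝ) + A := by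
      rw [hD, hAdef, ← add_assoc,
        Finset.add_sum_erase Finset.univ (fun j => Real.exp (inner ℝ (c j) x : ℝ))
          (Finset.mem_univ k)]
    have hsum : ∀ ck : EuclideanSpace ℝ (Fin d),
        (∑ j, Real.exp (inner ℝ (Function.update c k ck j) x : ℝ)) + S
          = Real.exp (inner ℝ ck x : ℝ) + A := by
      intro ck
      have h1 : (∑ j, Real.exp (inner ℝ (Function.update c k ck j) x : ℝ))
          = ∑ j, Function.update (fun j => Real.exp (inner ℝ (c j) x : ℝ)) k
              (Real.exp (inner ℝ ck x : ℝ)) j :=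
        Finset.sum_congr rfl fun j _ =>
          Function.apply_update (fun _ v => Real.exp (inner ℝ v x : ℝ)) c k ck j
      rw [h1, ← Finset.add_sum_erase Finset.univ _ (Finset.mem_univ k),
        Function.update_self, hAdef, add_assoc]
      congr 2
      exact Finset.sum_congr rfl fun j hj =>
        Function.update_of_ne (Finset.ne_of_mem_erase hj) _ _
    have hinner : HasFDerivAt (fun ck : EuclideanSpace ℝ (Fin d) => (inner ℝ ck x : ℝ))
        (innerSL ℝ x) (c k) := by
      have h1 : (fun ck : EuclideanSpace ℝ (Fin d) => (inner ℝ ck x : ℝ))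
          = fun ck => (innerSL ℝ x) ck := by
        funext ck
        simp only [innerSL_apply_apply]
        exact (real_inner_comm ck x).symm
      rw [h1]
      exact (innerSL ℝ x).hasFDerivAt
    have hne : Real.exp (inner ℝ (c k) x : ℝ) + A ≠ 0 := by positivity
    have hlog := ((hinner.exp.add_const A).log hne).const_mul β
    have hval : (innerSL ℝ x) x = (inner ℝ x x : ℝ) := rfl
    by_cases hky : k = y
    · subst hky
      have hfun : (fun ck => L (Function.update c k ck))
          = fun ck : EuclideanSpace ℝ (Fin d) =>
              -(inner ℝ ck x : ℝ) + β * Real.log (Real.exp (inner ℝ ck x : ℝ) + A) := by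
        funext ck
        rw [hL, hD, hsum, Function.update_self]
      have h : HasFDerivAt (fun ck : EuclideanSpace ℝ (Fin d) =>
          -(inner ℝ ck x : ℝ) + β * Real.log (Real.exp (inner ℝ ck x : ℝ) + A)) _ (c k) :=
        hinner.neg.add hlog
      rw [hfun, h.fderiv, if_pos rfl]
      simp only [ContinuousLinearMap.add_apply, ContinuousLinearMap.neg_apply,
        ContinuousLinearMap.coe_smul', Pi.smul_apply, hval, smul_eq_mul, hDc]
      ring
    · have hfun : (fun ck => L (Function.update c k ck))
          = fun ck : EuclideanSpace ℝ (Fin d) =>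
              -(inner ℝ (c y) x : ℝ) + β * Real.log (Real.exp (inner ℝ ck x : ℝ) + A) := by
        funext ck
        rw [hL, hD, hsum, Function.update_of_ne (Ne.symm hky)]
      have h := (hasFDerivAt_const (-(inner ℝ (c y) x : ℝ)) (c k)).add hlog
      have h' : HasFDerivAt (fun ck : EuclideanSpace ℝ (Fin d) =>
          -(inner ℝ (c y) x : ℝ) + β * Real.log (Real.exp (inner ℝ ck x : ℝ) + A))
          ((0 : EuclideanSpace ℝ (Fin d) →L[ℝ] ℝ) + β • (Real.exp (inner ℝ (c k) x : ℝ) + A)⁻¹ •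
            Real.exp (inner ℝ (c k) x : ℝ) • innerSL ℝ x) (c k) := h
      rw [hfun, h'.fderiv, if_neg hky]
      simp only [ContinuousLinearMap.add_apply, ContinuousLinearMap.zero_apply,
        ContinuousLinearMap.coe_smul', Pi.smul_apply, hval, smul_eq_mul, hDc]
      ring
  constructor
  · intro k hk
    rw [main k, if_neg hk, sub_zero]
    have h1 := Real.exp_pos (inner ℝ (c k) x : ℝ)
    positivity
  · intro hpy
    rw [main y, if_pos rfl]
    have h1 : β * p y < 1 := by
      rw [lt_div_iff₀ hβ] at hpy; linarith
    rw [hp] at h1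
    nlinarith [Real.exp_pos (inner ℝ (c y) x : ℝ), hDpos, hxx]
end

section
/- Let α be a real number with 0 < α < 1 and let 0 < K_t < K_h be real numbers. Then log (1 + α * K_t) + α * K_t * log ((1 + α * K_t) / α) < log (1 + α * K_h) + α * K_h * log ((1 + α * K_h) / α); that is, the minimal achievable parametric contrastive loss value is strictly increasing in the number of positive pairs K. -/
theorem stmt_16 (α Kt Kh : ℝ) (hα0 : 0 < α) (hα1 : α < 1)
    (hKt : 0 < Kt) (hKK : Kt < Kh) :
    Real.log (1 + α * Kt) + α * Kt * Real.log ((1 + α * Kt) / α) <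
      Real.log (1 + α * Kh) + α * Kh * Real.log ((1 + α * Kh) / α) := by
  have hxt : 0 < α * Kt := mul_pos hα0 hKt
  have hxh : 0 < α * Kh := mul_pos hα0 (hKt.trans hKK)
  have hxx : α * Kt < α * Kh := by nlinarith
  have hlogα : Real.log α < 0 := Real.log_neg hα0 hα1
  have h1t : (0:ℝ) < 1 + α * Kt := by linarith
  have h1h : (0:ℝ) < 1 + α * Kh := by linarith
  have hlog : Real.log (1 + α * Kt) < Real.log (1 + α * Kh) :=
    Real.log_lt_log h1t (by linarith)
  have hlt : 0 < Real.log (1 + α * Kt) := Real.log_pos (by linarith)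
  rw [Real.log_div (by linarith) hα0.ne', Real.log_div (by linarith) hα0.ne']
  have h2 : α * Kt * (Real.log (1 + α * Kt) - Real.log α) <
      α * Kh * (Real.log (1 + α * Kh) - Real.log α) := by
    apply mul_lt_mul hxx (by linarith) (by linarith) hxh.le
  linarith
end
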